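/- Let M > 0 and a > 0 be real numbers. Then lim_{r → +∞} (1 − 2M/r + r²/a²)^(1/2) · ∫_r^∞ s·(1 − 2M/s + s²/a²)^(−3/2) ds = a². -/

import Mathlib

/-!
Writing κ(s) = 1 - 2M/s + s²/a², the function -a² κ^(-1/2) has derivative
(1 + a²M/s³) · s κ(s)^(-3/2), so the integral of that expression over (r, ∞) is exactly
a² κ(r)^(-1/2). On (r, ∞) the factor 1 + a²M/s³ lies within δ(r) = |a²M|/r³ of 1, hence
X(r) = κ(r)^(1/2) ∫_r^∞ s κ(s)^(-3/2) ds satisfies |X(r) - a²| ≤ δ(r) X(r), while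
δ(r) → 0.
-/

open MeasureTheory Set Filter Topology

theorem tendsto_of_abs_sub_le_mul {α : Type*} {l : Filter α} {X δ : α → ℝ} {c : ℝ}
    (hδ : Tendsto δ l (𝓝 0)) (hX : ∀ᶠ r in l, |X r - c| ≤ δ r * X r) :
    Tendsto X l (𝓝 c) := by
  have hsmall : ∀ᶠ r in l, |δ r| ≤ 1 / 2 :=
    (by simpa using hδ.abs : Tendsto (fun r => |δ r|) l (𝓝 0)).eventually
      (ge_mem_nhds (by norm_num))
  have hbound : Tendsto (fun r => 2 * |c| * |δ r|) l (𝓝 0) := by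
    simpa using (hδ.abs.const_mul (2 * |c|))
  rw [tendsto_iff_norm_sub_tendsto_zero]
  refine squeeze_zero' (Eventually.of_forall fun _ => norm_nonneg _) ?_ hbound
  filter_upwards [hX, hsmall] with r hr hr_small
  have hXc : |X r| ≤ |c| + |X r - c| := by
    simpa using abs_add_le c (X r - c)
  have hXδ : |X r - c| ≤ |δ r| * |X r| :=
    hr.trans ((le_abs_self _).trans (abs_mul _ _).le)
  rw [Real.norm_eq_abs]
  nlinarith [abs_nonneg (δ r), abs_nonneg (X r - c)]

theorem abs_integral_one_add_mul_sub_integral_le {α : Type*} [MeasurableSpace α] {μ : Measure α}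
    {f ε : α → ℝ} {δ : ℝ} (hf : Integrable f μ) (hf₀ : 0 ≤ᵐ[μ] f)
    (hεf : Integrable (fun x => (1 + ε x) * f x) μ) (hε : ∀ᵐ x ∂μ, |ε x| ≤ δ) :
    |∫ x, (1 + ε x) * f x ∂μ - ∫ x, f x ∂μ| ≤ δ * ∫ x, f x ∂μ := by
  rw [← integral_sub hεf hf, ← integral_const_mul, ← Real.norm_eq_abs]
  refine norm_integral_le_of_norm_le (hf.const_mul δ) ?_
  filter_upwards [hf₀, hε] with x hfx hεx
  rw [Real.norm_eq_abs, show (1 + ε x) * f x - f x = ε x * f x by ring, abs_mul,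
    abs_of_nonneg hfx]
  exact mul_le_mul_of_nonneg_right hεx hfx

theorem integrable_of_integrable_one_add_mul {α : Type*} [MeasurableSpace α] {μ : Measure α}
    {f ε : α → ℝ} {δ : ℝ} (hf : AEStronglyMeasurable f μ) (hf₀ : 0 ≤ᵐ[μ] f)
    (hεf : Integrable (fun x => (1 + ε x) * f x) μ) (hε : ∀ᵐ x ∂μ, |ε x| ≤ δ)
    (hδ : δ < 1) :
    Integrable f μ := by
  refine (hεf.const_mul (1 - δ)⁻¹).mono' hf ?_
  filter_upwards [hf₀, hε] with x hfx hεx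
  rw [Real.norm_eq_abs, abs_of_nonneg hfx, le_inv_mul_iff₀ (by linarith)]
  exact mul_le_mul_of_nonneg_right (by linarith [neg_abs_le (ε x)]) hfx

theorem abs_div_pow_three_le (c : ℝ) {r s : ℝ} (hr : 0 < r) (hrs : r ≤ s) :
    |c / s ^ 3| ≤ |c| / r ^ 3 := by
  rw [abs_div, abs_of_pos (pow_pos (hr.trans_le hrs) 3)]
  gcongr

namespace McVittie

noncomputable def kappa (M a s : ℝ) : ℝ := 1 - 2 * M / s + s ^ 2 / a ^ 2

noncomputable def integrand (M a s : ℝ) : ℝ := s * kappa M a s ^ (-(3 : ℝ) / 2)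

variable {M a : ℝ}

theorem kappa_pos (ha : a ≠ 0) {s : ℝ} (hs : 0 < s) (hMs : 2 * |M| ≤ s) :
    0 < kappa M a s := by
  have h2M : 2 * M / s ≤ 1 := by
    rw [div_le_one hs]; linarith [le_abs_self M]
  have hsq : 0 < s ^ 2 / a ^ 2 := by positivity
  unfold kappa; linarith

theorem tendsto_kappa_atTop (ha : a ≠ 0) : Tendsto (kappa M a) atTop atTop := by
  have h₁ : Tendsto (fun s : ℝ => 1 - 2 * M / s) atTop (𝓝 1) := by
    simpa using tendsto_const_nhds.sub ((tendsto_const_nhds (x := 2 * M)).div_atTop tendsto_id)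
  exact h₁.add_atTop ((tendsto_pow_atTop two_ne_zero).atTop_div_const (by positivity))

theorem hasDerivAt_kappa {s : ℝ} (hs : s ≠ 0) :
    HasDerivAt (kappa M a) (2 * M / s ^ 2 + 2 * s / a ^ 2) s := by
  have h₁ : HasDerivAt (fun t : ℝ => 2 * M / t) (-(2 * M / s ^ 2)) s := by
    simpa [div_eq_mul_inv] using (hasDerivAt_inv hs).const_mul (2 * M)
  have h₂ : HasDerivAt (fun t : ℝ => t ^ 2 / a ^ 2) (2 * s / a ^ 2) s := by
    simpa using (hasDerivAt_pow 2 s).div_const (a ^ 2)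
  exact (((hasDerivAt_const s 1).sub h₁).add h₂).congr_deriv (by ring)

theorem hasDerivAt_neg_mul_kappa_rpow (ha : a ≠ 0) {s : ℝ} (hs : s ≠ 0)
    (hκ : 0 < kappa M a s) :
    HasDerivAt (fun t => -(a ^ 2 * kappa M a t ^ (-(1 : ℝ) / 2)))
      ((1 + a ^ 2 * M / s ^ 3) * integrand M a s) s := by
  refine (((hasDerivAt_kappa hs).rpow_const (Or.inl hκ.ne')).const_mul (a ^ 2)).neg.congr_deriv ?_
  rw [integrand, show -(1 : ℝ) / 2 - 1 = -(3 : ℝ) / 2 by norm_num]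
  field_simp
  ring

theorem tendsto_neg_mul_kappa_rpow_atTop (ha : a ≠ 0) :
    Tendsto (fun t => -(a ^ 2 * kappa M a t ^ (-(1 : ℝ) / 2))) atTop (𝓝 0) := by
  have h : Tendsto (fun x : ℝ => x ^ (-(1 : ℝ) / 2)) atTop (𝓝 0) := by
    simpa [neg_div] using tendsto_rpow_neg_atTop (y := (1 : ℝ) / 2) (by norm_num)
  simpa using ((h.comp (tendsto_kappa_atTop ha)).const_mul (a ^ 2)).neg

theorem integrableOn_Ioi_one_add_mul_and_integral_eq (ha : a ≠ 0) {r : ℝ} (hr : 0 < r)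
    (hMr : 2 * |M| ≤ r) (hδ : |a ^ 2 * M| / r ^ 3 < 1) :
    IntegrableOn (fun s => (1 + a ^ 2 * M / s ^ 3) * integrand M a s) (Ioi r) ∧
      ∫ s in Ioi r, (1 + a ^ 2 * M / s ^ 3) * integrand M a s =
        a ^ 2 * kappa M a r ^ (-(1 : ℝ) / 2) := by
  have hderiv : ∀ s ∈ Ici r, HasDerivAt (fun t => -(a ^ 2 * kappa M a t ^ (-(1 : ℝ) / 2)))
      ((1 + a ^ 2 * M / s ^ 3) * integrand M a s) s := fun s hs =>
    hasDerivAt_neg_mul_kappa_rpow ha (hr.trans_le hs).ne'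
      (kappa_pos ha (hr.trans_le hs) (hMr.trans hs))
  have hnonneg : ∀ s ∈ Ioi r, 0 ≤ (1 + a ^ 2 * M / s ^ 3) * integrand M a s := by
    intro s hs
    have hs₀ : 0 < s := hr.trans hs
    have hε := abs_div_pow_three_le (a ^ 2 * M) hr hs.le
    have hfactor : 0 ≤ 1 + a ^ 2 * M / s ^ 3 := by linarith [neg_abs_le (a ^ 2 * M / s ^ 3)]
    have hκ := (kappa_pos ha hs₀ (hMr.trans hs.le)).le
    exact mul_nonneg hfactor (mul_nonneg hs₀.le (Real.rpow_nonneg hκ _))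
  have hlim := tendsto_neg_mul_kappa_rpow_atTop (M := M) ha
  refine ⟨integrableOn_Ioi_deriv_of_nonneg' hderiv hnonneg hlim, ?_⟩
  rw [integral_Ioi_of_hasDerivAt_of_nonneg' hderiv hnonneg hlim]
  ring

theorem abs_rpow_mul_integral_sub_le (ha : a ≠ 0) {r : ℝ} (hr : 0 < r) (hMr : 2 * |M| ≤ r)
    (hδ : |a ^ 2 * M| / r ^ 3 < 1) :
    |kappa M a r ^ ((1 : ℝ) / 2) * (∫ s in Ioi r, integrand M a s) - a ^ 2| ≤
      |a ^ 2 * M| / r ^ 3 *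
        (kappa M a r ^ ((1 : ℝ) / 2) * ∫ s in Ioi r, integrand M a s) := by
  obtain ⟨hint, hintegral⟩ := integrableOn_Ioi_one_add_mul_and_integral_eq ha hr hMr hδ
  have hκ : ∀ s ∈ Ioi r, 0 < kappa M a s := fun s hs =>
    kappa_pos ha (hr.trans hs) (hMr.trans hs.out.le)
  have hε : ∀ᵐ s ∂volume.restrict (Ioi r), |a ^ 2 * M / s ^ 3| ≤ |a ^ 2 * M| / r ^ 3 :=
    (ae_restrict_iff' measurableSet_Ioi).2 <| .of_forall fun s hs =>
      abs_div_pow_three_le _ hr hs.out.le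
  have hf₀ : 0 ≤ᵐ[volume.restrict (Ioi r)] integrand M a :=
    (ae_restrict_iff' measurableSet_Ioi).2 <| .of_forall fun s hs =>
      mul_nonneg (hr.trans hs).le (Real.rpow_nonneg (hκ s hs).le _)
  have hmeas : Measurable (integrand M a) := by
    unfold integrand kappa; fun_prop
  have hf := integrable_of_integrable_one_add_mul hmeas.aestronglyMeasurable hf₀ hint hε hδ
  have hcompare := abs_integral_one_add_mul_sub_integral_le hf hf₀ hint hε
  rw [hintegral] at hcompare
  have hκr : 0 < kappa M a r := kappa_pos ha hr hMr
  have hcancel : kappa M a r ^ ((1 : ℝ) / 2) * kappa M a r ^ (-(1 : ℝ) / 2) = 1 := by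
    rw [← Real.rpow_add hκr]; norm_num
  calc |kappa M a r ^ ((1 : ℝ) / 2) * (∫ s in Ioi r, integrand M a s) - a ^ 2|
      = kappa M a r ^ ((1 : ℝ) / 2) *
          |a ^ 2 * kappa M a r ^ (-(1 : ℝ) / 2) - ∫ s in Ioi r, integrand M a s| := by
        conv_rhs => rw [← abs_of_pos (Real.rpow_pos_of_pos hκr ((1 : ℝ) / 2)), ← abs_mul,
          mul_sub, mul_left_comm, hcancel, mul_one, abs_sub_comm]
    _ ≤ kappa M a r ^ ((1 : ℝ) / 2) *
          (|a ^ 2 * M| / r ^ 3 * ∫ s in Ioi r, integrand M a s) := by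
        gcongr
    _ = _ := by ring

end McVittie

theorem mcvittie_integral_limit_atTop_general (M a : ℝ) (ha : 0 < a) :
    Filter.Tendsto
      (fun r : ℝ => (1 - 2 * M / r + r ^ 2 / a ^ 2) ^ ((1 : ℝ) / 2) *
        ∫ s in Set.Ioi r, s * (1 - 2 * M / s + s ^ 2 / a ^ 2) ^ (-(3 : ℝ) / 2))
      Filter.atTop (nhds (a ^ 2)) := by
  have hδ : Tendsto (fun r : ℝ => |a ^ 2 * M| / r ^ 3) atTop (𝓝 0) :=
    tendsto_const_nhds.div_atTop (tendsto_pow_atTop three_ne_zero)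
  refine tendsto_of_abs_sub_le_mul hδ ?_
  filter_upwards [eventually_gt_atTop 0, eventually_ge_atTop (2 * |M|),
    hδ.eventually (gt_mem_nhds one_pos)] with r hr hMr hδr
  exact McVittie.abs_rpow_mul_integral_sub_le ha.ne' hr hMr hδr

/-- The limit `κ(r)^(1/2)·∫_r^∞ s·κ(s)^(-3/2) ds → a²` as `r → +∞`, where
`κ(s) = 1 - 2M/s + s²/a²` is the allowed-region function of the open (K = -1)
McVittie spacetime. -/
theorem mcvittie_integral_limit_atTop (M a : ℝ) (hM : 0 < M) (ha : 0 < a) :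
    Filter.Tendsto
      (fun r : ℝ => (1 - 2 * M / r + r ^ 2 / a ^ 2) ^ ((1 : ℝ) / 2) *
        ∫ s in Set.Ioi r, s * (1 - 2 * M / s + s ^ 2 / a ^ 2) ^ (-(3 : ℝ) / 2))
      Filter.atTop (nhds (a ^ 2)) :=
  mcvittie_integral_limit_atTop_general M a ha
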